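/- arXiv:2103.12913 — 2 statements merged into one kernel-verified Lean document; each statement's English description precedes it below -/
import Mathlib

section
/- Let ν = N(θ, Σ) with Σ positive definite, p ≥ 1, E ⊆ R^n, ε ≥ 0, and set A = {Σ^{-1/2}(x − θ) : x ∈ E} and η = ε / ||Σ^{1/2}||_p. Then ν(E_ε^{(ℓ_p)}) ≥ γ_n(A_η^{(ℓ_p)}), where expansions are taken in ℓ_p norm and ||Σ^{1/2}||_p is the induced matrix p-norm. -/
/-! The affine map `f x = θ + Σ^{1/2} x` pushes `γₙ` forward to `ν`, and it is
`‖Σ^{1/2}‖_p`-Lipschitz for the `ℓ_p` distance. Since it maps `A` back onto `E`, it maps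
`A_η` into `E_ε`, so `ν(E_ε) = γₙ(f⁻¹(E_ε)) ≥ γₙ(A_η)`. -/

open MeasureTheory ProbabilityTheory Matrix

noncomputable def lpNorm {n : ℕ} (p : ℝ) (x : Fin n → ℝ) : ℝ :=
  (∑ i, |x i| ^ p) ^ (1 / p)

def expand {n : ℕ} (p η : ℝ) (E : Set (Fin n → ℝ)) : Set (Fin n → ℝ) :=
  {x | ∃ x' ∈ E, lpNorm p (x' - x) ≤ η}

noncomputable def stdGaussian (n : ℕ) : Measure (Fin n → ℝ) :=
  Measure.pi fun _ => gaussianReal 0 1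

/-- The induced matrix p-norm `‖M‖_p = sup_{v ≠ 0} ‖Mv‖_p / ‖v‖_p`. -/
noncomputable def matLpNorm {n : ℕ} (p : ℝ) (M : Matrix (Fin n) (Fin n) ℝ) : ℝ :=
  ⨆ v ∈ {v : Fin n → ℝ | v ≠ 0}, lpNorm p (M.mulVec v) / lpNorm p v

lemma lpNorm_nonneg {n : ℕ} (p : ℝ) (x : Fin n → ℝ) : 0 ≤ lpNorm p x :=
  Real.rpow_nonneg (Finset.sum_nonneg fun i _ => Real.rpow_nonneg (abs_nonneg (x i)) p) _

lemma lpNorm_eq_norm_toLp {n : ℕ} {p : ℝ} (hp : 0 < p) (x : Fin n → ℝ) :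
    lpNorm p x = ‖WithLp.toLp (ENNReal.ofReal p) x‖ := by
  rw [PiLp.norm_eq_sum (by rwa [ENNReal.toReal_ofReal hp.le]), ENNReal.toReal_ofReal hp.le]
  rfl

lemma lpNorm_pos {n : ℕ} {p : ℝ} (hp : 1 ≤ p) {x : Fin n → ℝ} (hx : x ≠ 0) :
    0 < lpNorm p x := by
  have : Fact (1 ≤ ENNReal.ofReal p) := ⟨by simpa using hp⟩
  rw [lpNorm_eq_norm_toLp (zero_lt_one.trans_le hp)]
  exact norm_pos_iff.2 (by simpa using hx)

lemma lpNorm_zero {n : ℕ} {p : ℝ} (hp : 0 < p) : lpNorm p (0 : Fin n → ℝ) = 0 := by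
  simp [_root_.lpNorm, Real.zero_rpow hp.ne', one_div, Real.zero_rpow (inv_ne_zero hp.ne')]

lemma exists_lpNorm_mulVec_le {n : ℕ} {p : ℝ} (hp : 1 ≤ p) (M : Matrix (Fin n) (Fin n) ℝ) :
    ∃ C, ∀ v, lpNorm p (M *ᵥ v) ≤ C * lpNorm p v := by
  have : Fact (1 ≤ ENNReal.ofReal p) := ⟨by simpa using hp⟩
  let e := WithLp.linearEquiv (ENNReal.ofReal p) ℝ (Fin n → ℝ)
  let L := LinearMap.toContinuousLinearMap (e.symm.toLinearMap ∘ₗ M.mulVecLin ∘ₗ e.toLinearMap)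
  refine ⟨‖L‖, fun v => ?_⟩
  simp only [lpNorm_eq_norm_toLp (zero_lt_one.trans_le hp)]
  exact L.le_opNorm (WithLp.toLp _ v)

lemma matLpNorm_nonneg {n : ℕ} (p : ℝ) (M : Matrix (Fin n) (Fin n) ℝ) : 0 ≤ matLpNorm p M :=
  Real.iSup_nonneg fun _ => Real.iSup_nonneg fun _ =>
    div_nonneg (lpNorm_nonneg _ _) (lpNorm_nonneg _ _)

lemma lpNorm_mulVec_le_matLpNorm {n : ℕ} {p : ℝ} (hp : 1 ≤ p) (M : Matrix (Fin n) (Fin n) ℝ)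
    (v : Fin n → ℝ) : lpNorm p (M *ᵥ v) ≤ matLpNorm p M * lpNorm p v := by
  rcases eq_or_ne v 0 with rfl | hv
  · simp [lpNorm_zero (zero_lt_one.trans_le hp)]
  obtain ⟨C, hC⟩ := exists_lpNorm_mulVec_le hp M
  -- boundedness makes `matLpNorm` a true supremum rather than the junk value of `⨆`
  have hbdd : BddAbove (Set.range fun w : Fin n → ℝ =>
      ⨆ (_ : w ∈ {v : Fin n → ℝ | v ≠ 0}), lpNorm p (M *ᵥ w) / lpNorm p w) := by
    refine ⟨max C 0, Set.forall_mem_range.2 fun w => Real.iSup_le (fun hw => ?_) le_sup_right⟩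
    rw [div_le_iff₀ (lpNorm_pos hp hw)]
    exact (hC w).trans (mul_le_mul_of_nonneg_right le_sup_left (lpNorm_nonneg p w))
  rw [← div_le_iff₀ (lpNorm_pos hp hv)]
  calc lpNorm p (M *ᵥ v) / lpNorm p v
      = ⨆ (_ : v ∈ {v : Fin n → ℝ | v ≠ 0}), lpNorm p (M *ᵥ v) / lpNorm p v := by
        rw [ciSup_pos (show v ∈ {v : Fin n → ℝ | v ≠ 0} from hv)]
    _ ≤ matLpNorm p M := le_ciSup hbdd v

lemma expand_image_subset_preimage_expand {n : ℕ} {p η ε : ℝ} (hp : 1 ≤ p)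
    {M M' : Matrix (Fin n) (Fin n) ℝ} (hMM' : M * M' = 1) (θ : Fin n → ℝ)
    (E : Set (Fin n → ℝ)) (hηε : matLpNorm p M * η ≤ ε) :
    expand p η ((fun x => M' *ᵥ (x - θ)) '' E) ⊆ (fun y => θ + M *ᵥ y) ⁻¹' expand p ε E := by
  rintro y ⟨_, ⟨x, hxE, rfl⟩, hxy⟩
  refine ⟨x, hxE, ?_⟩
  have hdiff : x - (θ + M *ᵥ y) = M *ᵥ (M' *ᵥ (x - θ) - y) := by
    rw [mulVec_sub, mulVec_mulVec, hMM', one_mulVec]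
    abel
  calc lpNorm p (x - (θ + M *ᵥ y))
      = lpNorm p (M *ᵥ (M' *ᵥ (x - θ) - y)) := by rw [hdiff]
    _ ≤ matLpNorm p M * lpNorm p (M' *ᵥ (x - θ) - y) := lpNorm_mulVec_le_matLpNorm hp _ _
    _ ≤ matLpNorm p M * η := mul_le_mul_of_nonneg_left hxy (matLpNorm_nonneg p M)
    _ ≤ ε := hηε

theorem gaussian_expansion_transfer_general {n : ℕ}
    (sqrtSig invSqrtSig : Matrix (Fin n) (Fin n) ℝ)
    (hinv₁ : sqrtSig * invSqrtSig = 1)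
    (θ : Fin n → ℝ)
    (ν : Measure (Fin n → ℝ))
    (hν : ν = Measure.map (fun x => θ + sqrtSig.mulVec x) (stdGaussian n))
    (p : ℝ) (hp : 1 ≤ p) (E : Set (Fin n → ℝ)) (ε : ℝ) (hε : 0 ≤ ε)
    (A : Set (Fin n → ℝ)) (hA : A = (fun x => invSqrtSig.mulVec (x - θ)) '' E)
    (η : ℝ) (hη : η = ε / matLpNorm p sqrtSig) :
    ν (expand p ε E) ≥ (stdGaussian n) (expand p η A) := by
  have hηε : matLpNorm p sqrtSig * η ≤ ε := by
    rcases (matLpNorm_nonneg p sqrtSig).eq_or_lt with h | h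
    · rwa [← h, zero_mul]
    · rw [hη, mul_div_cancel₀ ε h.ne']
  have hmeas : Measurable fun x => θ + sqrtSig *ᵥ x := by fun_prop
  rw [hν, hA]
  exact (measure_mono (expand_image_subset_preimage_expand hp hinv₁ θ E hηε)).trans
    (Measure.le_map_apply hmeas.aemeasurable _)

/-- With `ν = N(θ, Sig)`, `A = {Sig^{-1/2}(x-θ) : x ∈ E}` and
`η = ε / ‖Sig^{1/2}‖_p`, we have `ν(E_ε^{(ℓ_p)}) ≥ γₙ(A_η^{(ℓ_p)})`. -/
theorem gaussian_expansion_transfer {n : ℕ}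
    (Sig sqrtSig invSqrtSig : Matrix (Fin n) (Fin n) ℝ)
    (hSig : Sig.PosDef) (hsqrt : sqrtSig * sqrtSig = Sig) (hsqrtPD : sqrtSig.PosDef)
    (hinv₁ : sqrtSig * invSqrtSig = 1) (hinv₂ : invSqrtSig * sqrtSig = 1)
    (θ : Fin n → ℝ)
    (ν : Measure (Fin n → ℝ))
    (hν : ν = Measure.map (fun x => θ + sqrtSig.mulVec x) (stdGaussian n))
    (p : ℝ) (hp : 1 ≤ p) (E : Set (Fin n → ℝ)) (ε : ℝ) (hε : 0 ≤ ε)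
    (A : Set (Fin n → ℝ)) (hA : A = (fun x => invSqrtSig.mulVec (x - θ)) '' E)
    (η : ℝ) (hη : η = ε / matLpNorm p sqrtSig) :
    ν (expand p ε E) ≥ (stdGaussian n) (expand p η A) :=
  gaussian_expansion_transfer_general sqrtSig invSqrtSig hinv₁ θ ν hν p hp E ε hε A hA η hη
end

section
/- Let ν = N(θ, Σ) on R^n with Σ positive definite, let v_1 be a unit eigenvector of Σ for its largest eigenvalue, and let E = {x : v_1^T x + b ≤ 0}. Then for every ε ≥ 0, ν(E_ε^{(ℓ_2)}) = Φ(Φ^{-1}(ν(E)) + ε/||Σ^{1/2}||_2), i.e., the lower bound of the generalized Gaussian isoperimetric inequality with p = 2 is attained with equality. -/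
open MeasureTheory ProbabilityTheory Matrix

noncomputable def Phi (t : ℝ) : ℝ := ((gaussianReal 0 1) (Set.Iic t)).toReal

noncomputable def PhiInv : ℝ → ℝ := Function.invFun Phi

/-!
Since `Σ^{1/2} v₁ = √λ₁ v₁`, the scalar `v₁ᵀx + b` has law `N(m, λ₁)` under `ν`, with
`m = v₁ᵀθ + b`, so `ν{v₁ᵀx + b ≤ δ} = Φ((δ - m)/√λ₁)` for every `δ`. For a unit normal `v₁`,
the `ε`-expansion of `E` is the half-space `{v₁ᵀx + b ≤ ε}`, hence
`ν(E_ε) = Φ((ε - m)/√λ₁) = Φ(Φ⁻¹(ν(E)) + ε/√λ₁)`. Finally `‖Σ^{1/2}‖₂ = √λ₁`, because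
`‖Σ^{1/2}v‖² = vᵀΣv ≤ λ₁‖v‖²` by the spectral theorem, with equality at `v₁`.
-/

lemma lpNorm_two_eq_norm {n : ℕ} (x : Fin n → ℝ) :
    lpNorm 2 x = ‖(WithLp.toLp 2 x : EuclideanSpace ℝ (Fin n))‖ := by
  rw [EuclideanSpace.norm_eq, Real.sqrt_eq_rpow, _root_.lpNorm]
  congr 1
  refine Finset.sum_congr rfl fun i _ => ?_
  rw [Real.norm_eq_abs, ← Real.rpow_natCast]
  norm_num

lemma dotProduct_eq_inner {n : ℕ} (w x : Fin n → ℝ) :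
    w ⬝ᵥ x = inner ℝ (WithLp.toLp 2 w : EuclideanSpace ℝ (Fin n)) (WithLp.toLp 2 x) := by
  rw [EuclideanSpace.inner_toLp_toLp, star_trivial, dotProduct_comm]

lemma lpNorm_two_nonneg {n : ℕ} (x : Fin n → ℝ) : 0 ≤ lpNorm 2 x := by
  rw [lpNorm_two_eq_norm]
  exact norm_nonneg _

lemma lpNorm_two_pos {n : ℕ} {x : Fin n → ℝ} (hx : x ≠ 0) : 0 < lpNorm 2 x := by
  rw [lpNorm_two_eq_norm, norm_pos_iff]
  exact fun h => hx (congrArg WithLp.ofLp h)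

lemma lpNorm_two_smul {n : ℕ} (c : ℝ) (x : Fin n → ℝ) :
    lpNorm 2 (c • x) = |c| * lpNorm 2 x := by
  rw [lpNorm_two_eq_norm, lpNorm_two_eq_norm, WithLp.toLp_smul, norm_smul, Real.norm_eq_abs]

lemma dotProduct_self_eq_lpNorm_sq {n : ℕ} (x : Fin n → ℝ) : x ⬝ᵥ x = lpNorm 2 x ^ 2 := by
  rw [lpNorm_two_eq_norm, ← real_inner_self_eq_norm_sq, dotProduct_eq_inner]

lemma abs_dotProduct_le_lpNorm_mul_lpNorm {n : ℕ} (w x : Fin n → ℝ) :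
    |w ⬝ᵥ x| ≤ lpNorm 2 w * lpNorm 2 x := by
  rw [lpNorm_two_eq_norm, lpNorm_two_eq_norm, dotProduct_eq_inner]
  exact abs_real_inner_le_norm _ _

lemma expand_two_halfSpace {n : ℕ} {w : Fin n → ℝ} (hw : lpNorm 2 w = 1) (b : ℝ) {ε : ℝ}
    (hε : 0 ≤ ε) : expand 2 ε {x | w ⬝ᵥ x + b ≤ 0} = {x | w ⬝ᵥ x + b ≤ ε} := by
  ext x
  constructor
  · rintro ⟨x', hx' : w ⬝ᵥ x' + b ≤ 0, hdist⟩
    have hshift : w ⬝ᵥ x - w ⬝ᵥ x' ≤ lpNorm 2 (x' - x) := by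
      have := neg_le_of_abs_le (abs_dotProduct_le_lpNorm_mul_lpNorm w (x' - x))
      rw [hw, one_mul, dotProduct_sub] at this
      linarith
    show w ⬝ᵥ x + b ≤ ε
    linarith
  · intro (hx : w ⬝ᵥ x + b ≤ ε)
    set t := max 0 (w ⬝ᵥ x + b)
    refine ⟨x - t • w, ?_, ?_⟩
    · show w ⬝ᵥ (x - t • w) + b ≤ 0
      rw [dotProduct_sub, dotProduct_smul, dotProduct_self_eq_lpNorm_sq, hw, smul_eq_mul]
      linarith [le_max_right 0 (w ⬝ᵥ x + b)]
    · rw [sub_sub_cancel_left, ← neg_smul, lpNorm_two_smul, hw, mul_one, abs_neg,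
        abs_of_nonneg (le_max_left _ _)]
      exact max_le hε hx

lemma Matrix.IsHermitian.vecMul_eq_mulVec {ι : Type*} [Fintype ι] {S : Matrix ι ι ℝ}
    (hS : S.IsHermitian) (v : ι → ℝ) : v ᵥ* S = S *ᵥ v := by
  rw [← mulVec_transpose, ← conjTranspose_eq_transpose_of_trivial, hS]

lemma Matrix.IsHermitian.dotProduct_mulVec_le {ι : Type*} [Fintype ι] [DecidableEq ι]
    {M : Matrix ι ι ℝ} (hM : M.IsHermitian) {c : ℝ}
    (hc : ∀ (μ : ℝ) (v : ι → ℝ), v ≠ 0 → M *ᵥ v = μ • v → μ ≤ c) (v : ι → ℝ) :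
    v ⬝ᵥ M *ᵥ v ≤ c * (v ⬝ᵥ v) := by
  have hW : (c • 1 - M).IsHermitian := (isHermitian_one.smul (IsSelfAdjoint.all c)).sub hM
  have hpsd : (c • 1 - M).PosSemidef := by
    refine hW.posSemidef_iff_eigenvalues_nonneg.2 fun i => ?_
    set e := (hW.eigenvectorBasis i).ofLp
    have he : e ≠ 0 := fun h =>
      hW.eigenvectorBasis.orthonormal.ne_zero i (WithLp.ofLp_injective 2 h)
    have heig : M *ᵥ e = (c - hW.eigenvalues i) • e := by
      have := hW.mulVec_eigenvectorBasis i
      rw [sub_mulVec, smul_mulVec, one_mulVec] at this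
      rw [sub_smul, ← this]
      abel
    simpa using hc _ e he heig
  have := hpsd.dotProduct_mulVec_nonneg v
  rw [star_trivial, sub_mulVec, smul_mulVec, one_mulVec, dotProduct_sub, dotProduct_smul,
    smul_eq_mul] at this
  linarith

lemma Matrix.PosDef.mulVec_eq_sqrt_smul {ι : Type*} [Fintype ι] {S : Matrix ι ι ℝ}
    (hS : S.PosDef) {c : ℝ} (hc : 0 ≤ c) {v : ι → ℝ} (hv : (S * S) *ᵥ v = c • v) :
    S *ᵥ v = √c • v := by
  -- `u` is an eigenvector of `S` for the eigenvalue `-√c ≤ 0`, so positivity forces `u = 0`.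
  set u := S *ᵥ v - √c • v
  have hSu : S *ᵥ u = (-√c) • u := by
    rw [mulVec_sub, mulVec_smul, mulVec_mulVec, hv, smul_sub, neg_smul, neg_smul, smul_smul,
      Real.mul_self_sqrt hc]
    abel
  by_contra hne
  have hpos := hS.dotProduct_mulVec_pos (x := u) (sub_ne_zero.2 hne)
  rw [star_trivial, hSu, dotProduct_smul, smul_eq_mul] at hpos
  have huu : 0 ≤ u ⬝ᵥ u := by simpa using dotProduct_star_self_nonneg u
  nlinarith [Real.sqrt_nonneg c]

lemma lpNorm_mulVec_le_sqrt_mul {n : ℕ} {S : Matrix (Fin n) (Fin n) ℝ} (hS : S.IsHermitian)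
    {c : ℝ} (hc : ∀ v, v ⬝ᵥ (S * S) *ᵥ v ≤ c * (v ⬝ᵥ v)) (v : Fin n → ℝ) :
    lpNorm 2 (S *ᵥ v) ≤ √c * lpNorm 2 v := by
  have hsq : lpNorm 2 (S *ᵥ v) ^ 2 ≤ c * lpNorm 2 v ^ 2 := by
    have := hc v
    rwa [← mulVec_mulVec, dotProduct_mulVec, hS.vecMul_eq_mulVec, dotProduct_self_eq_lpNorm_sq,
      dotProduct_self_eq_lpNorm_sq] at this
  rw [← Real.sqrt_sq (lpNorm_two_nonneg (S *ᵥ v)), ← Real.sqrt_sq (lpNorm_two_nonneg v),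
    ← Real.sqrt_mul' _ (sq_nonneg _)]
  exact Real.sqrt_le_sqrt hsq

lemma matLpNorm_two_eq_of_le_of_eq {n : ℕ} {M : Matrix (Fin n) (Fin n) ℝ} {c : ℝ}
    (hle : ∀ v, lpNorm 2 (M *ᵥ v) ≤ c * lpNorm 2 v) {v₀ : Fin n → ℝ} (hv₀ : v₀ ≠ 0)
    (heq : lpNorm 2 (M *ᵥ v₀) = c * lpNorm 2 v₀) : matLpNorm 2 M = c := by
  have hc : 0 ≤ c := by
    have := lpNorm_two_nonneg (M *ᵥ v₀)
    rw [heq] at this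
    exact nonneg_of_mul_nonneg_left this (lpNorm_two_pos hv₀)
  -- for `v = 0` the inner supremum is over an empty index type, hence `0 ≤ c`
  have hratio : ∀ v, (⨆ _ : v ∈ {v : Fin n → ℝ | v ≠ 0}, lpNorm 2 (M *ᵥ v) / lpNorm 2 v) ≤ c :=
    fun v => Real.iSup_le (fun _ => div_le_of_le_mul₀ (lpNorm_two_nonneg v) hc (hle v)) hc
  refine le_antisymm (Real.iSup_le hratio hc) ?_
  calc c = ⨆ _ : v₀ ∈ {v : Fin n → ℝ | v ≠ 0}, lpNorm 2 (M *ᵥ v₀) / lpNorm 2 v₀ := by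
        rw [ciSup_pos (show v₀ ∈ {v : Fin n → ℝ | v ≠ 0} from hv₀), heq,
          mul_div_cancel_right₀ _ (lpNorm_two_pos hv₀).ne']
    _ ≤ matLpNorm 2 M := le_ciSup ⟨c, Set.forall_mem_range.2 hratio⟩ v₀

lemma map_dotProduct_stdGaussian {n : ℕ} (w : Fin n → ℝ) :
    (stdGaussian n).map (w ⬝ᵥ ·) = gaussianReal 0 (lpNorm 2 w ^ 2).toNNReal := by
  let L := innerSL ℝ (WithLp.toLp 2 w : EuclideanSpace ℝ (Fin n))
  have hL : (w ⬝ᵥ ·) = L ∘ WithLp.toLp 2 := funext fun x => dotProduct_eq_inner w x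
  rw [hL, _root_.stdGaussian, ← Measure.map_map (by fun_prop) (by fun_prop),
    map_pi_eq_stdGaussian, IsGaussian.map_eq_gaussianReal L, integral_strongDual_stdGaussian,
    variance_dual_stdGaussian, innerSL_apply_norm, lpNorm_two_eq_norm]

lemma map_dotProduct_add_map_affine_stdGaussian {n : ℕ} (θ : Fin n → ℝ)
    (A : Matrix (Fin n) (Fin n) ℝ) (w : Fin n → ℝ) (b : ℝ) :
    ((stdGaussian n).map (fun x => θ + A *ᵥ x)).map (fun y => w ⬝ᵥ y + b) =
      gaussianReal (w ⬝ᵥ θ + b) (lpNorm 2 (w ᵥ* A) ^ 2).toNNReal := by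
  have hcomp : (fun y => w ⬝ᵥ y + b) ∘ (fun x => θ + A *ᵥ x) =
      (w ⬝ᵥ θ + b + ·) ∘ ((w ᵥ* A) ⬝ᵥ ·) := by
    ext x
    simp only [Function.comp_apply, dotProduct_add, dotProduct_mulVec]
    ring
  rw [Measure.map_map (by fun_prop) (by fun_prop), hcomp,
    ← Measure.map_map (by fun_prop) (by fun_prop), map_dotProduct_stdGaussian,
    gaussianReal_map_const_add, zero_add]

lemma Phi_eq_cdf : Phi = cdf (gaussianReal 0 1) :=
  funext fun t => (cdf_eq_real _ t).symm

lemma Phi_strictMono : StrictMono Phi := by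
  intro s t hst
  have hpos : gaussianReal 0 1 (Set.Ioc s t) ≠ 0 :=
    mt (gaussianReal_absolutelyContinuous' 0 one_ne_zero ·) (by simp [hst])
  rw [← measure_cdf (gaussianReal 0 1), StieltjesFunction.measure_Ioc, ← Phi_eq_cdf] at hpos
  simpa using hpos

lemma PhiInv_Phi (t : ℝ) : PhiInv (Phi t) = t :=
  Function.leftInverse_invFun Phi_strictMono.injective t

lemma gaussianReal_Iic_eq_Phi (m : ℝ) {σ : ℝ} (hσ : 0 < σ) (δ : ℝ) :
    (gaussianReal m (σ ^ 2).toNNReal (Set.Iic δ)).toReal = Phi ((δ - m) / σ) := by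
  have hmap : ((gaussianReal 0 1).map (σ * ·)).map (m + ·) = gaussianReal m (σ ^ 2).toNNReal := by
    rw [gaussianReal_map_const_mul, gaussianReal_map_const_add, mul_zero, zero_add, mul_one,
      Real.toNNReal_of_nonneg (sq_nonneg σ)]
  have hpre : ((m + ·) ∘ (σ * ·)) ⁻¹' Set.Iic δ = Set.Iic ((δ - m) / σ) := by
    ext t
    simp only [Set.mem_preimage, Function.comp_apply, Set.mem_Iic]
    rw [le_div_iff₀ hσ, mul_comm, le_sub_iff_add_le']
  rw [← hmap, Measure.map_map (by fun_prop) (by fun_prop),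
    Measure.map_apply (by fun_prop) measurableSet_Iic, hpre]
  rfl

lemma map_affine_stdGaussian_halfSpace_eq_Phi {n : ℕ} (θ : Fin n → ℝ)
    (A : Matrix (Fin n) (Fin n) ℝ) (w : Fin n → ℝ) (b δ : ℝ) (hw : 0 < lpNorm 2 (w ᵥ* A)) :
    (((stdGaussian n).map (fun x => θ + A *ᵥ x)) {x | w ⬝ᵥ x + b ≤ δ}).toReal =
      Phi ((δ - (w ⬝ᵥ θ + b)) / lpNorm 2 (w ᵥ* A)) := by
  rw [show {x | w ⬝ᵥ x + b ≤ δ} = (fun y => w ⬝ᵥ y + b) ⁻¹' Set.Iic δ from rfl,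
    ← Measure.map_apply (by fun_prop) measurableSet_Iic,
    map_dotProduct_add_map_affine_stdGaussian, gaussianReal_Iic_eq_Phi _ hw]

/-- For `ν = N(θ, Sig)` and the half space `E = {x : v₁ᵀx + b ≤ 0}` with `v₁`
a unit eigenvector for the largest eigenvalue of `Sig`, the generalized
Gaussian isoperimetric lower bound for `p = 2` is attained with equality. -/
theorem general_isoperimetry_tight {n : ℕ}
    (Sig sqrtSig : Matrix (Fin n) (Fin n) ℝ)
    (hSig : Sig.PosDef) (hsqrt : sqrtSig * sqrtSig = Sig) (hsqrtPD : sqrtSig.PosDef)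
    (θ : Fin n → ℝ) (ν : Measure (Fin n → ℝ))
    (hν : ν = Measure.map (fun x => θ + sqrtSig.mulVec x) (stdGaussian n))
    (lam₁ : ℝ) (v₁ : Fin n → ℝ) (hv₁ : lpNorm 2 v₁ = 1)
    (heig : Sig.mulVec v₁ = lam₁ • v₁)
    (hmax : ∀ (μ : ℝ) (v : Fin n → ℝ), v ≠ 0 → Sig.mulVec v = μ • v → μ ≤ lam₁)
    (b : ℝ) (ε : ℝ) (hε : 0 ≤ ε) :
    (ν (expand 2 ε {x : Fin n → ℝ | v₁ ⬝ᵥ x + b ≤ 0})).toReal =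
      Phi (PhiInv ((ν {x : Fin n → ℝ | v₁ ⬝ᵥ x + b ≤ 0}).toReal) +
        ε / matLpNorm 2 sqrtSig) := by
  have hv₁0 : v₁ ≠ 0 := by
    rintro rfl
    simp [lpNorm_two_eq_norm] at hv₁
  have hlam : 0 < lam₁ := by
    simpa [heig, dotProduct_self_eq_lpNorm_sq, hv₁] using hSig.dotProduct_mulVec_pos hv₁0
  have hsqrt_v₁ : sqrtSig *ᵥ v₁ = √lam₁ • v₁ :=
    hsqrtPD.mulVec_eq_sqrt_smul hlam.le (by rw [hsqrt, heig])
  have hnorm_v₁ : lpNorm 2 (sqrtSig *ᵥ v₁) = √lam₁ * lpNorm 2 v₁ := by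
    rw [hsqrt_v₁, lpNorm_two_smul, abs_of_nonneg (Real.sqrt_nonneg _)]
  have hopNorm : matLpNorm 2 sqrtSig = √lam₁ :=
    matLpNorm_two_eq_of_le_of_eq (lpNorm_mulVec_le_sqrt_mul hsqrtPD.isHermitian
      (hsqrt ▸ hSig.isHermitian.dotProduct_mulVec_le hmax)) hv₁0 hnorm_v₁
  have hσ : lpNorm 2 (v₁ ᵥ* sqrtSig) = √lam₁ := by
    rw [hsqrtPD.isHermitian.vecMul_eq_mulVec, hnorm_v₁, hv₁, mul_one]
  have hlaw (δ : ℝ) : (ν {x | v₁ ⬝ᵥ x + b ≤ δ}).toReal = Phi ((δ - (v₁ ⬝ᵥ θ + b)) / √lam₁) := by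
    rw [hν, ← hσ]
    exact map_affine_stdGaussian_halfSpace_eq_Phi θ sqrtSig v₁ b δ (hσ ▸ Real.sqrt_pos.2 hlam)
  rw [expand_two_halfSpace hv₁ b hε, hlaw, hlaw, PhiInv_Phi, hopNorm]
  congr 1
  ring
end
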